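/- Let X ⊆ {0,1}^d and V ⊆ ℝ^d be finite sets, let λ and λ̌ be probability vectors on X such that every diagonal entry of A_semi(λ) is positive, let α ∈ [0,1), and set λ̃ = α λ̌ + (1 − α) λ. Then E_η[ max_{v∈V} v^⊤ A_semi(λ̃)^{-1/2} η ] ≤ (1 − α)^{-1/2} · E_η[ max_{v∈V} v^⊤ A_semi(λ)^{-1/2} η ]. (This is the Sudakov–Fernique mixing step used in Step 3 of the proof of the paper's Theorem 9 to show that mixing a design with an exploration design inflates the Gaussian-width constraint by at most (1−α)^{-1/2}.) -/

import Mathlib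

/-!
The Gaussian width `W(c) = E_η[max_{v∈V} Σᵢ vᵢ cᵢ ηᵢ]` is convex in `c` (a mean of maxima of
linear forms) and unchanged when the sign of one `cᵢ` is flipped (flip `ηᵢ` with it), so along
each coordinate it is an even convex function, hence nondecreasing in `|cᵢ|`; it is also
positively homogeneous. Since `x ∈ {0,1}^d` and `λ̌ ≥ 0`, every diagonal entry of `A_semi(λ̃)` is
at least `(1 - α)` times that of `A_semi(λ)`, so `A_semi(λ̃)^{-1/2} ≤ (1 - α)^{-1/2} A_semi(λ)^{-1/2}`
entrywise, and the theorem follows.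
-/

open MeasureTheory ProbabilityTheory

/-- The standard Gaussian measure `N(0, I_d)` on `ℝ^d`. -/
noncomputable def stdGaussian (d : ℕ) : Measure (Fin d → ℝ) :=
  Measure.pi fun _ => gaussianReal 0 1

open Set Function
open scoped Convex

theorem ConvexOn.finset_sup' {𝕜 E β ι : Type*} [Semiring 𝕜] [PartialOrder 𝕜]
    [AddCommMonoid E] [AddCommMonoid β] [LinearOrder β] [IsOrderedAddMonoid β] [SMul 𝕜 E]
    [Module 𝕜 β] [PosSMulStrictMono 𝕜 β] {s : Set E} {t : Finset ι} (ht : t.Nonempty)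
    {f : ι → E → β} (hf : ∀ i ∈ t, ConvexOn 𝕜 s (f i)) :
    ConvexOn 𝕜 s (fun x => t.sup' ht fun i => f i x) := by
  simp_rw [← Finset.sup'_apply]
  exact Finset.sup'_induction ht f (fun _ h₁ _ h₂ => h₁.sup h₂) hf

theorem MeasureTheory.Integrable.finset_sup' {α ι : Type*} [MeasurableSpace α] {μ : Measure α}
    {t : Finset ι} (ht : t.Nonempty) {f : ι → α → ℝ} (hf : ∀ i ∈ t, Integrable (f i) μ) :
    Integrable (fun x => t.sup' ht fun i => f i x) μ := by
  simp_rw [← Finset.sup'_apply]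
  exact Finset.sup'_induction (p := (Integrable · μ)) ht f (fun _ h₁ _ h₂ => h₁.sup h₂) hf

theorem ConvexOn.le_of_abs_le_of_even {g : ℝ → ℝ} (hg : ConvexOn ℝ univ g)
    (heven : ∀ t, g (-t) = g t) {s t : ℝ} (hst : |s| ≤ |t|) : g s ≤ g t := by
  have hs : s ∈ [-|t| -[ℝ] |t|] := by
    rw [segment_eq_Icc (by simp)]; exact abs_le.mp hst
  calc g s ≤ max (g (-|t|)) (g |t|) := hg.le_on_segment trivial trivial hs
    _ = g |t| := by rw [heven, max_self]
    _ = g t := by rcases abs_choice t with h | h <;> rw [h]; exact heven t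

theorem ConvexOn.le_of_abs_le_of_update_neg {ι : Type*} [Fintype ι] [DecidableEq ι]
    {f : (ι → ℝ) → ℝ} (hf : ConvexOn ℝ univ f)
    (heven : ∀ x k t, f (update x k (-t)) = f (update x k t)) {c C : ι → ℝ}
    (hcC : ∀ i, |c i| ≤ |C i|) : f c ≤ f C := by
  have hslice : ∀ x k {s t : ℝ}, |s| ≤ |t| → f (update x k s) ≤ f (update x k t) := by
    intro x k s t hst
    have hline : ∀ t, AffineMap.lineMap (update x k 0) (update x k 1) t = update x k t := by
      intro t; ext i; rcases eq_or_ne i k with rfl | hi <;> simp [AffineMap.lineMap_apply, *]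
    have hconv := hf.comp_affineMap (AffineMap.lineMap (update x k 0) (update x k 1) : ℝ →ᵃ[ℝ] _)
    simp only [comp_def, hline] at hconv
    exact hconv.le_of_abs_le_of_even (heven x k) hst
  suffices h : ∀ s : Finset ι, f c ≤ f (s.piecewise C c) by simpa using h Finset.univ
  intro s
  induction s using Finset.induction_on with
  | empty => simp
  | insert k s hk ih =>
    rw [Finset.piecewise_insert]
    calc f c ≤ f (s.piecewise C c) := ih
      _ = f (update (s.piecewise C c) k (c k)) := by
        rw [← Finset.piecewise_eq_of_notMem s C c hk, update_eq_self]
      _ ≤ _ := hslice _ _ (hcC k)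

section GaussianWidth

variable {d : ℕ}

theorem measurePreserving_mul_stdGaussian {ε : Fin d → ℝ} (hε : ∀ i, ε i ^ 2 = 1) :
    MeasurePreserving (ε * ·) (stdGaussian d) (stdGaussian d) :=
  measurePreserving_pi (f := fun i x => ε i * x) _ _ fun i =>
    ⟨measurable_const_mul _, by rw [gaussianReal_map_const_mul]; simp [hε i]⟩

theorem integrable_stdGaussian_sum_mul (a : Fin d → ℝ) :
    Integrable (fun η => ∑ i, a i * η i) (stdGaussian d) :=
  integrable_finsetSum _ fun i _ => (integrable_eval IsGaussian.integrable_id).const_mul (a i)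

noncomputable def gaussianWidth (V : Finset (Fin d → ℝ)) (hV : V.Nonempty) (c : Fin d → ℝ) : ℝ :=
  ∫ η, V.sup' hV (fun v => ∑ i, v i * η i * c i) ∂stdGaussian d

variable (V : Finset (Fin d → ℝ)) (hV : V.Nonempty)

theorem integrable_sup'_sum_mul (c : Fin d → ℝ) :
    Integrable (fun η => V.sup' hV (fun v => ∑ i, v i * η i * c i)) (stdGaussian d) := by
  refine Integrable.finset_sup' hV fun v _ => ?_
  simpa only [mul_right_comm] using integrable_stdGaussian_sum_mul (fun i => v i * c i)

theorem convexOn_gaussianWidth : ConvexOn ℝ univ (gaussianWidth V hV) := by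
  refine integral_convexOn_of_integrand_ae convex_univ (ae_of_all _ fun η => ?_)
    fun c _ => integrable_sup'_sum_mul V hV c
  refine ConvexOn.finset_sup' hV fun v _ => ?_
  have hlin : (fun c => ∑ i, v i * η i * c i) =
      ⇑(∑ i, (v i * η i) • LinearMap.proj i : (Fin d → ℝ) →ₗ[ℝ] ℝ) := by
    ext c; simp
  rw [hlin]
  exact LinearMap.convexOn _ convex_univ

theorem gaussianWidth_mul_of_sq_eq_one {ε : Fin d → ℝ} (hε : ∀ i, ε i ^ 2 = 1)
    (c : Fin d → ℝ) : gaussianWidth V hV (ε * c) = gaussianWidth V hV c := by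
  have hinv : Involutive (ε * ·) := fun η => by
    ext i; simp [← mul_assoc, ← sq, hε i]
  calc gaussianWidth V hV (ε * c)
      = ∫ η, V.sup' hV (fun v => ∑ i, v i * (ε * η) i * c i) ∂stdGaussian d := by
        simp only [gaussianWidth, Pi.mul_apply, mul_left_comm (ε _), mul_assoc]
    _ = gaussianWidth V hV c :=
        (measurePreserving_mul_stdGaussian hε).integral_comp
          (MeasurableEquiv.ofInvolutive _ hinv (measurable_const_mul ε)).measurableEmbedding
          (fun η => V.sup' hV fun v => ∑ i, v i * η i * c i)

theorem gaussianWidth_smul {r : ℝ} (hr : 0 ≤ r) (c : Fin d → ℝ) :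
    gaussianWidth V hV (r • c) = r * gaussianWidth V hV c := by
  rw [gaussianWidth, gaussianWidth, ← integral_const_mul]
  congr 1 with η
  rw [Finset.apply_sup'_eq_sup'_comp hV (r * ·) fun x y => mul_max_of_nonneg x y hr]
  simp only [comp_def, Finset.mul_sum, Pi.smul_apply, smul_eq_mul, mul_left_comm r]

theorem gaussianWidth_le_of_abs_le {c C : Fin d → ℝ} (hcC : ∀ i, |c i| ≤ |C i|) :
    gaussianWidth V hV c ≤ gaussianWidth V hV C := by
  refine (convexOn_gaussianWidth V hV).le_of_abs_le_of_update_neg (fun x k t => ?_) hcC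
  have hflip : update x k (-t) = update (1 : Fin d → ℝ) k (-1) * update x k t := by
    ext i; rcases eq_or_ne i k with rfl | hi <;> simp [*]
  rw [hflip, gaussianWidth_mul_of_sq_eq_one]
  intro i; rcases eq_or_ne i k with rfl | hi <;> simp [*]

end GaussianWidth

theorem sudakov_fernique_mixing_general (d : ℕ) (X V : Finset (Fin d → ℝ)) (hV : V.Nonempty)
    (h01 : ∀ x ∈ X, ∀ i, x i = 0 ∨ x i = 1)
    (w wc : (Fin d → ℝ) → ℝ)
    (hwpos : ∀ i : Fin d, 0 < ∑ x ∈ X, w x * x i)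
    (hwc0 : ∀ x ∈ X, 0 ≤ wc x)
    (α : ℝ) (hα0 : 0 ≤ α) (hα1 : α < 1) :
    (∫ η, V.sup' hV (fun v => ∑ i, v i * η i /
        Real.sqrt (∑ x ∈ X, (α * wc x + (1 - α) * w x) * x i)) ∂ stdGaussian d) ≤
      (Real.sqrt (1 - α))⁻¹ *
        ∫ η, V.sup' hV (fun v => ∑ i, v i * η i /
          Real.sqrt (∑ x ∈ X, w x * x i)) ∂ stdGaussian d := by
  have hdesign : ∀ i, (1 - α) * ∑ x ∈ X, w x * x i ≤
      ∑ x ∈ X, (α * wc x + (1 - α) * w x) * x i := fun i => by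
    have hexplore : 0 ≤ α * ∑ x ∈ X, wc x * x i := mul_nonneg hα0 <| Finset.sum_nonneg
      fun x hx => mul_nonneg (hwc0 x hx) (by rcases h01 x hx i with h | h <;> simp [h])
    simp only [add_mul, Finset.sum_add_distrib, mul_assoc, ← Finset.mul_sum]
    linarith
  have hscale : ∀ i, (√(∑ x ∈ X, (α * wc x + (1 - α) * w x) * x i))⁻¹ ≤
      (√(1 - α))⁻¹ * (√(∑ x ∈ X, w x * x i))⁻¹ := fun i => by
    rw [← mul_inv, ← Real.sqrt_mul (by linarith)]
    exact inv_anti₀ (Real.sqrt_pos.2 (mul_pos (by linarith) (hwpos i)))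
      (Real.sqrt_le_sqrt (hdesign i))
  calc _ = gaussianWidth V hV fun i => (√(∑ x ∈ X, (α * wc x + (1 - α) * w x) * x i))⁻¹ := by
        simp only [div_eq_mul_inv]; rfl
    _ ≤ gaussianWidth V hV ((√(1 - α))⁻¹ • fun i => (√(∑ x ∈ X, w x * x i))⁻¹) :=
        gaussianWidth_le_of_abs_le V hV fun i => by
          simp only [Pi.smul_apply, smul_eq_mul]
          rw [abs_of_nonneg (by positivity), abs_of_nonneg (by positivity)]
          exact hscale i
    _ = _ := by
        rw [gaussianWidth_smul V hV (by positivity)]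
        simp only [gaussianWidth, div_eq_mul_inv]

/-- **Sudakov–Fernique mixing step (Step 3 of the proof of Theorem 9).** Mixing a design
`λ` (with positive diagonal design entries) with any design `λ̌` as
`λ̃ = α λ̌ + (1-α) λ`, `α ∈ [0,1)`, inflates the Gaussian width by at most
`(1-α)^{-1/2}`:
`E_η[max_{v∈V} vᵀ A_semi(λ̃)^{-1/2} η] ≤ (1-α)^{-1/2} E_η[max_{v∈V} vᵀ A_semi(λ)^{-1/2} η]`. -/
theorem sudakov_fernique_mixing (d : ℕ) (X V : Finset (Fin d → ℝ)) (hV : V.Nonempty)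
    (h01 : ∀ x ∈ X, ∀ i, x i = 0 ∨ x i = 1)
    (w wc : (Fin d → ℝ) → ℝ)
    (hw0 : ∀ x ∈ X, 0 ≤ w x) (hw1 : ∑ x ∈ X, w x = 1)
    (hwpos : ∀ i : Fin d, 0 < ∑ x ∈ X, w x * x i)
    (hwc0 : ∀ x ∈ X, 0 ≤ wc x) (hwc1 : ∑ x ∈ X, wc x = 1)
    (α : ℝ) (hα0 : 0 ≤ α) (hα1 : α < 1) :
    (∫ η, V.sup' hV (fun v => ∑ i, v i * η i /
        Real.sqrt (∑ x ∈ X, (α * wc x + (1 - α) * w x) * x i)) ∂ stdGaussian d) ≤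
      (Real.sqrt (1 - α))⁻¹ *
        ∫ η, V.sup' hV (fun v => ∑ i, v i * η i /
          Real.sqrt (∑ x ∈ X, w x * x i)) ∂ stdGaussian d :=
  sudakov_fernique_mixing_general d X V hV h01 w wc hwpos hwc0 α hα0 hα1
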